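/- Let C > 0 and 0 < α < 1 be constants such that Δ_ρ^S(m) ≤ C m^α and N_ρ^S(m) ≤ exp(C m^α) for all m (inverted orbit bounds for the action of the first Grigorchuk group on the orbit of ρ = 1^∞). Then there is a constant C_2 > 0 such that |P_2(ℓ)| ≤ exp(C_2 ℓ^α) for every sufficiently large n and every ℓ ≤ r_n. -/

import Mathlib

noncomputable section

/-! ### Generalities: the group of self-homeomorphisms -/

instance homeoGroup {X : Type*} [TopologicalSpace X] : Group (X ≃ₜ X) where
  mul f g := g.trans f
  one := Homeomorph.refl X
  inv := Homeomorph.symm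
  mul_assoc a b c := Homeomorph.ext fun _ => rfl
  one_mul a := Homeomorph.ext fun _ => rfl
  mul_one a := Homeomorph.ext fun _ => rfl
  inv_mul_cancel a := Homeomorph.ext a.symm_apply_apply

/-! ### Homeomorphisms of a product with a discrete factor -/

theorem cont_fibered {X Y Z : Type*} [TopologicalSpace X] [TopologicalSpace Y]
    [DiscreteTopology Y] [TopologicalSpace Z] (f : X → Y → Z) (hf : ∀ y, Continuous (f · y)) :
    Continuous (fun p : X × Y => f p.1 p.2) := by
  rw [continuous_iff_continuousAt]
  rintro ⟨x, y⟩
  have hmem : {p : X × Y | p.2 = y} ∈ nhds (x, y) := by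
    have ho : IsOpen {p : X × Y | p.2 = y} := by
      have h : ({p : X × Y | p.2 = y}) = Prod.snd ⁻¹' {y} := rfl
      rw [h]; exact (isOpen_discrete _).preimage continuous_snd
    exact ho.mem_nhds rfl
  refine ContinuousAt.congr (((hf y).comp continuous_fst).continuousAt) ?_
  filter_upwards [hmem] with p hp
  simp [hp]

/-- The homeomorphism of `X × Y`, `Y` discrete, acting on each fiber `X × {y}`
by the homeomorphism `F y`. -/
def fiberedHomeo {X Y : Type*} [TopologicalSpace X] [TopologicalSpace Y] [DiscreteTopology Y]
    (F : Y → X ≃ₜ X) : (X × Y) ≃ₜ (X × Y) where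
  toEquiv := Equiv.prodCongrLeft fun y => (F y).toEquiv
  continuous_toFun := by
    refine Continuous.prodMk ?_ continuous_snd
    exact cont_fibered (fun x y => F y x) (fun y => (F y).continuous)
  continuous_invFun := by
    refine Continuous.prodMk ?_ continuous_snd
    exact cont_fibered (fun x y => (F y).symm x) (fun y => (F y).symm.continuous)

/-- The homeomorphism of `X × Y`, `Y` discrete, permuting the fibers according to a
permutation of `Y` and acting trivially in the `X`-coordinate. -/
def basePermHomeo {X Y : Type*} [TopologicalSpace X] [TopologicalSpace Y] [DiscreteTopology Y]
    (e : Equiv.Perm Y) : (X × Y) ≃ₜ (X × Y) where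
  toEquiv := Equiv.prodCongr (Equiv.refl X) e
  continuous_toFun :=
    continuous_fst.prodMk (continuous_of_discreteTopology.comp continuous_snd)
  continuous_invFun :=
    continuous_fst.prodMk (continuous_of_discreteTopology.comp continuous_snd)

/-! ### The Cantor set -/

/-- The Cantor set `{0,1}^ℕ`. -/
abbrev Cantor : Type := ℕ → Bool

/-- Prepending a finite word to an element of the Cantor set. -/
def wordAppend (w : List Bool) (ξ : Cantor) : Cantor :=
  fun n => if h : n < w.length then w[n] else ξ (n - w.length)

/-- A dyadic partition set: a finite set of binary words whose cylinders partition
the Cantor set. -/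
def IsDyadicPartition (A : Finset (List Bool)) : Prop :=
  ∀ ξ : Cantor, ∃! w : List Bool, w ∈ A ∧ ∃ ξ' : Cantor, wordAppend w ξ' = ξ

/-- The defining condition for elements of Thompson's group `V`: a homeomorphism of the
Cantor set given by prefix replacement along a bijection of two dyadic partition sets. -/
def IsThompsonVMap (γ : Cantor ≃ₜ Cantor) : Prop :=
  ∃ (A B : Finset (List Bool)) (f : List Bool → List Bool),
    IsDyadicPartition A ∧ IsDyadicPartition B ∧ A.card = B.card ∧ Set.BijOn f A B ∧
    ∀ w ∈ A, ∀ ξ : Cantor, γ (wordAppend w ξ) = wordAppend (f w) ξ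

/-- Thompson's group `V`, as a group of homeomorphisms of the Cantor set. -/
def ThompsonV : Subgroup (Cantor ≃ₜ Cantor) :=
  Subgroup.closure {γ | IsThompsonVMap γ}

theorem cantor_core_continuous (G : ℕ → Bool → Bool → Bool → Bool → Bool → Bool → Bool) :
    Continuous (fun ξ : Cantor =>
      (fun n => G n (ξ 0) (ξ 1) (ξ 2) (ξ (n - 1)) (ξ n) (ξ (n + 1)) : Cantor)) := by
  apply continuous_pi
  intro n
  have h : Continuous (fun ξ : Cantor =>
      ((ξ 0, ξ 1, ξ 2, ξ (n - 1), ξ n, ξ (n + 1)) : Bool × Bool × Bool × Bool × Bool × Bool)) :=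
    (continuous_apply 0).prodMk ((continuous_apply 1).prodMk
      ((continuous_apply 2).prodMk ((continuous_apply (n-1)).prodMk
      ((continuous_apply n).prodMk (continuous_apply (n+1))))))
  exact (continuous_of_discreteTopology
    (f := fun p : Bool × Bool × Bool × Bool × Bool × Bool =>
      G n p.1 p.2.1 p.2.2.1 p.2.2.2.1 p.2.2.2.2.1 p.2.2.2.2.2)).comp h

def consC (b : Bool) (ξ : Cantor) : Cantor := fun n => match n with
  | 0 => b
  | n+1 => ξ n

def shiftC (ξ : Cantor) : Cantor := fun n => ξ (n + 1)

theorem consC_continuous (b : Bool) : Continuous (consC b) := by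
  apply continuous_pi
  intro n
  match n with
  | 0 => exact continuous_const
  | n+1 => exact continuous_apply n

theorem shiftC_continuous : Continuous shiftC :=
  continuous_pi fun n => continuous_apply (n + 1)

/-! ### Thompson's generator `X₀` as a homeomorphism of the Cantor set -/

def x0core (n : ℕ) (b0 b1 : Bool) (w v u : Bool) : Bool :=
  if b0 = false then
    (if b1 = false then u
     else if n = 0 then true else if n = 1 then false else v)
  else (if n ≤ 1 then true else w)

def x0invcore (n : ℕ) (b0 b1 : Bool) (w v u : Bool) : Bool :=
  if b0 = false then (if n ≤ 1 then false else w)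
  else if b1 = false then (if n = 0 then false else if n = 1 then true else v)
  else (if n = 0 then true else u)

/-- `X₀ : 00ξ ↦ 0ξ`, `01ξ ↦ 10ξ`, `1ξ ↦ 11ξ`. -/
def x0fun (ξ : Cantor) : Cantor := fun n => x0core n (ξ 0) (ξ 1) (ξ (n - 1)) (ξ n) (ξ (n + 1))

def x0inv (ξ : Cantor) : Cantor := fun n => x0invcore n (ξ 0) (ξ 1) (ξ (n - 1)) (ξ n) (ξ (n + 1))

theorem x0_left_inv : Function.LeftInverse x0inv x0fun := by
  intro ξ
  funext n
  rcases hb0 : ξ 0 with _ | _ <;> rcases hb1 : ξ 1 with _ | _ <;>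
    rcases n with _ | _ | n <;>
    simp [x0fun, x0inv, x0core, x0invcore, hb0, hb1]

theorem x0_right_inv : Function.RightInverse x0inv x0fun := by
  intro ξ
  funext n
  rcases hb0 : ξ 0 with _ | _ <;> rcases hb1 : ξ 1 with _ | _ <;>
    rcases n with _ | _ | n <;>
    simp [x0fun, x0inv, x0core, x0invcore, hb0, hb1]

/-- Thompson's generator `X₀` as a homeomorphism of the Cantor set. -/
def X0c : Cantor ≃ₜ Cantor where
  toEquiv := ⟨x0fun, x0inv, x0_left_inv, x0_right_inv⟩
  continuous_toFun := cantor_core_continuous fun n b0 b1 _ w v u => x0core n b0 b1 w v u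
  continuous_invFun := cantor_core_continuous fun n b0 b1 _ w v u => x0invcore n b0 b1 w v u

/-- The homeomorphism `Cantor ≃ₜ Cantor × Bool` splitting off the first letter. -/
def splitHomeo : Cantor ≃ₜ Cantor × Bool where
  toEquiv := ⟨fun ξ => (shiftC ξ, ξ 0), fun p => consC p.2 p.1,
    fun ξ => by funext n; rcases n with _ | n <;> rfl,
    fun p => by
      refine Prod.ext ?_ rfl
      funext n; rfl⟩
  continuous_toFun := shiftC_continuous.prodMk (continuous_apply 0)
  continuous_invFun := by
    apply continuous_pi
    intro n
    match n with
    | 0 => exact continuous_snd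
    | n+1 => exact (continuous_apply n).comp continuous_fst

/-- Thompson's generator `X₁ = 1X₀`: the copy of `X₀` supported on the cylinder `1C`. -/
def X1c : Cantor ≃ₜ Cantor :=
  splitHomeo.trans ((fiberedHomeo fun b =>
    if b = true then X0c else Homeomorph.refl Cantor).trans splitHomeo.symm)

end

noncomputable section

/-! ### The Grigorchuk generators -/

namespace Grig

def aFun : List Bool → List Bool
  | [] => []
  | x :: w => (!x) :: w

mutual
  def bFun : List Bool → List Bool
    | [] => []
    | false :: w => false :: aFun w
    | true :: w => true :: cFun w
  def cFun : List Bool → List Bool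
    | [] => []
    | false :: w => false :: aFun w
    | true :: w => true :: dFun w
  def dFun : List Bool → List Bool
    | [] => []
    | false :: w => false :: w
    | true :: w => true :: bFun w
end

theorem aFun_involutive : Function.Involutive aFun := by
  intro w
  match w with
  | [] => rfl
  | x :: w => simp [aFun]

theorem bcd_involutive :
    ∀ w : List Bool, bFun (bFun w) = w ∧ cFun (cFun w) = w ∧ dFun (dFun w) = w := by
  intro w
  induction w with
  | nil => exact ⟨rfl, rfl, rfl⟩
  | cons x w ih =>
    rcases x with _ | _
    · simp [bFun, cFun, dFun, aFun_involutive w]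
    · simp [bFun, cFun, dFun, ih.1, ih.2.1, ih.2.2]

theorem bFun_involutive : Function.Involutive bFun := fun w => (bcd_involutive w).1
theorem cFun_involutive : Function.Involutive cFun := fun w => (bcd_involutive w).2.1
theorem dFun_involutive : Function.Involutive dFun := fun w => (bcd_involutive w).2.2

theorem aFun_length : ∀ w : List Bool, (aFun w).length = w.length := by
  intro w
  match w with
  | [] => rfl
  | x :: w => simp [aFun]

theorem bcd_length : ∀ w : List Bool,
    (bFun w).length = w.length ∧ (cFun w).length = w.length ∧ (dFun w).length = w.length := by
  intro w
  induction w with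
  | nil => exact ⟨rfl, rfl, rfl⟩
  | cons x w ih =>
    rcases x with _ | _
    · simp [bFun, cFun, dFun, aFun_length w]
    · simp [bFun, cFun, dFun, ih.1, ih.2.1, ih.2.2]

theorem bFun_length : ∀ w, (bFun w).length = w.length := fun w => (bcd_length w).1
theorem cFun_length : ∀ w, (cFun w).length = w.length := fun w => (bcd_length w).2.1
theorem dFun_length : ∀ w, (dFun w).length = w.length := fun w => (bcd_length w).2.2

/-- The generators of the first Grigorchuk group as permutations of the vertex set
`{0,1}*` of the rooted binary tree. -/
def aPerm : Equiv.Perm (List Bool) := aFun_involutive.toPerm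
def bPerm : Equiv.Perm (List Bool) := bFun_involutive.toPerm
def cPerm : Equiv.Perm (List Bool) := cFun_involutive.toPerm
def dPerm : Equiv.Perm (List Bool) := dFun_involutive.toPerm

/-- The generating set `S = {a, b, c, d}` (a set of involutions). -/
def Sset : Set (Equiv.Perm (List Bool)) := {aPerm, bPerm, cPerm, dPerm}

/-- The first Grigorchuk group. -/
def Grigorchuk : Subgroup (Equiv.Perm (List Bool)) := Subgroup.closure Sset

/-- Word length with respect to `S = {a, b, c, d}`. -/
def wordLength (g : Equiv.Perm (List Bool)) : ℕ :=
  sInf {k | ∃ l : List (Equiv.Perm (List Bool)),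
    (∀ x ∈ l, x ∈ Sset) ∧ l.length = k ∧ l.prod = g}

/-- The growth function of the first Grigorchuk group with respect to `S`. -/
def growthGrig (m : ℕ) : ℕ :=
  Nat.card {g : Equiv.Perm (List Bool) |
    ∃ l : List (Equiv.Perm (List Bool)), (∀ x ∈ l, x ∈ Sset) ∧ l.length ≤ m ∧ l.prod = g}

/-! ### Level transfer -/

def levelFun (n : ℕ) (f : List Bool → List Bool) (v : Fin n → Bool) : Fin n → Bool :=
  fun i => (f (List.ofFn v)).getD i false

theorem levelFun_involutive (n : ℕ) (f : List Bool → List Bool)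
    (hlen : ∀ l, (f l).length = l.length) (hinv : Function.Involutive f) :
    Function.Involutive (levelFun n f) := by
  intro v
  have key : ∀ u : Fin n → Bool, List.ofFn (levelFun n f u) = f (List.ofFn u) := by
    intro u
    apply List.ext_getElem
    · simp [hlen]
    · intro i h1 h2
      simp only [List.getElem_ofFn]
      simp [levelFun, List.getD_eq_getElem, h2]
  funext i
  simp only [levelFun, key v, hinv (List.ofFn v)]
  simp [List.getD_eq_getElem]

/-- The images `a_n, b_n, c_n, d_n` of the Grigorchuk generators in `Sym(X_n)`,
where the `n`-th level `X_n = {0,1}^n` is identified with `Fin n → Bool`. -/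
def aLev (n : ℕ) : Equiv.Perm (Fin n → Bool) :=
  (levelFun_involutive n aFun aFun_length aFun_involutive).toPerm
def bLev (n : ℕ) : Equiv.Perm (Fin n → Bool) :=
  (levelFun_involutive n bFun bFun_length bFun_involutive).toPerm
def cLev (n : ℕ) : Equiv.Perm (Fin n → Bool) :=
  (levelFun_involutive n cFun cFun_length cFun_involutive).toPerm
def dLev (n : ℕ) : Equiv.Perm (Fin n → Bool) :=
  (levelFun_involutive n dFun dFun_length dFun_involutive).toPerm

end Grig

/-! ### The space `C_{Y_n}` and the generating set `T_n` -/

namespace TV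

/-- The `n`-th level `X_n = {0,1}^n` of the binary tree. -/
abbrev XL (n : ℕ) : Type := Fin n → Bool

/-- `C_{Y_n} = C × Y_n` with `Y_n = X_n × {1,2,3,4}`; the sheets are indexed by `Fin 4`. -/
abbrev Mn (n : ℕ) : Type := Cantor × (XL n × Fin 4)

/-- `ρ_n = 1^n`. -/
def rhoL (n : ℕ) : XL n := fun _ => true
/-- `η_n = 1^{n-1}0`. -/
def etaL (n : ℕ) : XL n := fun i => decide ((i : ℕ) < n - 1)
/-- `θ_n = 01^{n-1}`. -/
def thetaL (n : ℕ) : XL n := fun i => decide (0 < (i : ℕ))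

/-- A type 1 generator: an element of `S_n` acting diagonally on the four sheets. -/
def type1Gen (n : ℕ) (s : Equiv.Perm (XL n)) : Mn n ≃ₜ Mn n :=
  basePermHomeo (s.prodCongr (Equiv.refl (Fin 4)))

/-- The set of type 1 generators (the truncated Grigorchuk generators). -/
def Type1Set (n : ℕ) : Set (Mn n ≃ₜ Mn n) :=
  {type1Gen n (Grig.aLev n), type1Gen n (Grig.bLev n),
   type1Gen n (Grig.cLev n), type1Gen n (Grig.dLev n)}

/-- A type 2 generator: an element of `Sym(4)_{η_n}`. -/
def type2Gen (n : ℕ) (π : Equiv.Perm (Fin 4)) : Mn n ≃ₜ Mn n :=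
  basePermHomeo (Equiv.prodCongrRight fun x : XL n =>
    if x = etaL n then π else Equiv.refl (Fin 4))

/-- The copy `Sym(4)_{η_n}` of the symmetric group over `η_n` (type 2 generators). -/
def Type2Set (n : ℕ) : Set (Mn n ≃ₜ Mn n) := Set.range (type2Gen n)

/-- The linking transposition `τ_n` (type 3), exchanging the first sheets over
`ρ_n` and `θ_n`. -/
def tauN (n : ℕ) : Mn n ≃ₜ Mn n :=
  basePermHomeo (Equiv.swap (rhoL n, (0 : Fin 4)) (thetaL n, (0 : Fin 4)))

/-- `X₁^{(n)}`: the copy of `X₀` supported on the fourth sheet over `ρ_n` (type 4). -/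
def X1n (n : ℕ) : Mn n ≃ₜ Mn n :=
  fiberedHomeo fun y : XL n × Fin 4 =>
    if y = (rhoL n, (3 : Fin 4)) then X0c else Homeomorph.refl Cantor

/-! The homeomorphism of `C × {1,2,3,4}` acting as `X₀` on `D = C_2 ⊔ C_3` (sheets `1`, `2`
in the `Fin 4` indexing) under the identification `(ξ, i) ↦ (i-2)ξ`, and trivial elsewhere. -/

def x0dSheet (i : Fin 4) (b0 : Bool) : Fin 4 :=
  if i = 1 then (if b0 = false then 1 else 2) else i

def x0dCore (i : Fin 4) (n : ℕ) (b0 w v u : Bool) : Bool :=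
  if i = 1 then (if b0 = false then u else if n = 0 then false else v)
  else if i = 2 then (if n = 0 then true else w)
  else v

def x0dSheetInv (i : Fin 4) (b0 : Bool) : Fin 4 :=
  if i = 2 then (if b0 = false then 1 else 2) else i

def x0dCoreInv (i : Fin 4) (n : ℕ) (b0 w v u : Bool) : Bool :=
  if i = 1 then (if n = 0 then false else w)
  else if i = 2 then (if b0 = false then (if n = 0 then true else v) else u)
  else v

def x0dFun (p : Cantor × Fin 4) : Cantor × Fin 4 :=
  ((fun n => x0dCore p.2 n (p.1 0) (p.1 (n - 1)) (p.1 n) (p.1 (n + 1))),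
    x0dSheet p.2 (p.1 0))

def x0dInvFun (p : Cantor × Fin 4) : Cantor × Fin 4 :=
  ((fun n => x0dCoreInv p.2 n (p.1 0) (p.1 (n - 1)) (p.1 n) (p.1 (n + 1))),
    x0dSheetInv p.2 (p.1 0))

theorem x0d_left_inv : Function.LeftInverse x0dInvFun x0dFun := by
  rintro ⟨ξ, i⟩
  rcases hb0 : ξ 0 with _ | _ <;> fin_cases i <;>
    refine Prod.ext (funext fun n => ?_) ?_ <;>
    first
      | (rcases n with _ | n <;>
          simp [x0dFun, x0dInvFun, x0dCore, x0dCoreInv, x0dSheet, x0dSheetInv, hb0])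
      | simp [x0dFun, x0dInvFun, x0dCore, x0dCoreInv, x0dSheet, x0dSheetInv, hb0]

theorem x0d_right_inv : Function.RightInverse x0dInvFun x0dFun := by
  rintro ⟨ξ, i⟩
  rcases hb0 : ξ 0 with _ | _ <;> fin_cases i <;>
    refine Prod.ext (funext fun n => ?_) ?_ <;>
    first
      | (rcases n with _ | n <;>
          simp [x0dFun, x0dInvFun, x0dCore, x0dCoreInv, x0dSheet, x0dSheetInv, hb0])
      | simp [x0dFun, x0dInvFun, x0dCore, x0dCoreInv, x0dSheet, x0dSheetInv, hb0]

theorem x0dFun_continuous : Continuous x0dFun := by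
  have h : Continuous fun p : Cantor × Fin 4 => x0dFun (p.1, p.2) := by
    refine cont_fibered (Z := Cantor × Fin 4) (fun ξ i => x0dFun (ξ, i)) fun i => ?_
    refine Continuous.prodMk ?_ ?_
    · exact cantor_core_continuous fun n b0 _ _ w v u => x0dCore i n b0 w v u
    · exact Continuous.comp
        (continuous_of_discreteTopology (α := Bool) (f := x0dSheet i)) (continuous_apply 0)
  simpa using h

theorem x0dInvFun_continuous : Continuous x0dInvFun := by
  have h : Continuous fun p : Cantor × Fin 4 => x0dInvFun (p.1, p.2) := by
    refine cont_fibered (Z := Cantor × Fin 4) (fun ξ i => x0dInvFun (ξ, i)) fun i => ?_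
    refine Continuous.prodMk ?_ ?_
    · exact cantor_core_continuous fun n b0 _ _ w v u => x0dCoreInv i n b0 w v u
    · exact Continuous.comp
        (continuous_of_discreteTopology (α := Bool) (f := x0dSheetInv i)) (continuous_apply 0)
  simpa using h

def X0D : (Cantor × Fin 4) ≃ₜ (Cantor × Fin 4) where
  toEquiv := ⟨x0dFun, x0dInvFun, x0d_left_inv, x0d_right_inv⟩
  continuous_toFun := x0dFun_continuous
  continuous_invFun := x0dInvFun_continuous

/-- Reshuffling `C × (X_n × {1,…,4}) ≃ₜ (C × {1,…,4}) × X_n`. -/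
def reshuffle (n : ℕ) : Mn n ≃ₜ (Cantor × Fin 4) × XL n :=
  ((Homeomorph.refl Cantor).prodCongr (Homeomorph.prodComm (XL n) (Fin 4))).trans
    (Homeomorph.prodAssoc Cantor (Fin 4) (XL n)).symm

/-- `X₀^{(n)}`: acting as `X₀` on `D_n = C_{(ρ_n,2)} ⊔ C_{(ρ_n,3)}` (type 4). -/
def X0n (n : ℕ) : Mn n ≃ₜ Mn n :=
  (reshuffle n).trans ((fiberedHomeo fun x : XL n =>
    if x = rhoL n then X0D else Homeomorph.refl (Cantor × Fin 4)).trans (reshuffle n).symm)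

/-- The type 4 generators. -/
def Type4Set (n : ℕ) : Set (Mn n ≃ₜ Mn n) := {X0n n, X1n n}

/-- The generating set `T_n`. -/
def TnSet (n : ℕ) : Set (Mn n ≃ₜ Mn n) :=
  Type1Set n ∪ Type2Set n ∪ {tauN n} ∪ Type4Set n

/-- The group `W_n = ⟨T_n⟩`. -/
def Wn (n : ℕ) : Subgroup (Mn n ≃ₜ Mn n) := Subgroup.closure (TnSet n)

/-- The generators of types `2`, `3` and `4`. -/
def typeSet (n : ℕ) : ℕ → Set (Mn n ≃ₜ Mn n)
  | 2 => Type2Set n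
  | 3 => {tauN n}
  | 4 => Type4Set n
  | _ => ∅

end TV

end
/-! ### The boundary action and actions of words -/

/-- The (continuous extension to the boundary `∂T = {0,1}^ℕ` of the) action of a tree
automorphism on the boundary of the rooted binary tree. -/
def boundaryAct (g : Equiv.Perm (List Bool)) (ξ : ℕ → Bool) : ℕ → Bool :=
  fun n => (g (List.ofFn fun i : Fin (n + 1) => ξ i)).getD n false

/-- Applying a word of generators to a vertex, letter by letter: the right action of the
word `l` (the generators in `S` are involutions). -/
def wordApply (l : List (Equiv.Perm (List Bool))) (v : List Bool) : List Bool :=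
  l.foldl (fun v s => s v) v

/-- The right action of a word on a boundary point. -/
def wordApplyB (l : List (Equiv.Perm (List Bool))) (ξ : ℕ → Bool) : ℕ → Bool :=
  l.foldl (fun ξ s => boundaryAct s ξ) ξ

/-- The boundary point `ρ = 1^∞`. -/
def rhoInf : ℕ → Bool := fun _ => true

/-- The vertex `ρ_n = 1^n` of the `n`-th level. -/
def rhoVertex (n : ℕ) : List Bool := List.replicate n true

/-- The vertex `η_n = 1^{n-1}0` of the `n`-th level. -/
def etaVertex (n : ℕ) : List Bool := List.replicate (n - 1) true ++ [false]
/-! ### Inverted orbits of the Grigorchuk group on the orbit of `ρ = 1^∞` -/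

/-- The inverted orbit `O_ξ(l) = {ξ, ξ·s_ℓ, ξ·s_{ℓ-1}s_ℓ, …, ξ·s_1⋯s_ℓ}` of the word
`l = s_1 ⋯ s_ℓ` at the boundary point `ξ`. -/
def invOrbitB (l : List (Equiv.Perm (List Bool))) (ξ : ℕ → Bool) : Set (ℕ → Bool) :=
  {x | ∃ i : ℕ, x = wordApplyB (l.drop i) ξ}

/-- The inverted orbit growth function `Δ_ρ^S` of the Grigorchuk group acting on the
orbit of `ρ = 1^∞`. -/
noncomputable def DeltaB (m : ℕ) : ℕ :=
  sSup {k | ∃ l : List (Equiv.Perm (List Bool)),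
    (∀ x ∈ l, x ∈ Grig.Sset) ∧ l.length ≤ m ∧ k = Nat.card (invOrbitB l rhoInf)}

/-- The number `N_ρ^S(m)` of distinct inverted orbits of words of length at most `m`. -/
noncomputable def NorbB (m : ℕ) : ℕ :=
  Nat.card {O : Set (ℕ → Bool) | ∃ l : List (Equiv.Perm (List Bool)),
    (∀ x ∈ l, x ∈ Grig.Sset) ∧ l.length ≤ m ∧ O = invOrbitB l rhoInf}

noncomputable section

open Classical in
/-- The `S_n ∪ {1}`-part of a letter of `T_n` (as in the normal form). -/
noncomputable def gpart (n : ℕ) (t : TV.Mn n ≃ₜ TV.Mn n) : TV.Mn n ≃ₜ TV.Mn n :=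
  if t ∈ TV.Type1Set n then t else 1

open Classical in
/-- The type-`j` part of a letter of `T_n` (as in the normal form), `j ∈ {2,3,4}`. -/
noncomputable def apart (n j : ℕ) (t : TV.Mn n ≃ₜ TV.Mn n) : TV.Mn n ≃ₜ TV.Mn n :=
  if t ∈ TV.typeSet n j then t else 1

/-- The first factor `p₁` of the normal form of the word `w` over `T_n`. -/
noncomputable def p1fac (n : ℕ) (w : List (TV.Mn n ≃ₜ TV.Mn n)) : TV.Mn n ≃ₜ TV.Mn n :=
  (w.map (gpart n)).prod

/-- The factor `p_j` (`j ∈ {2,3,4}`) of the normal form of the word `w = t_1 ⋯ t_ℓ` over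
`T_n`: the product `(a_1^{(j)})^{g_1 ⋯ g_ℓ} (a_2^{(j)})^{g_2 ⋯ g_ℓ} ⋯ (a_ℓ^{(j)})^{g_ℓ}`
of conjugates (`x^h = h⁻¹xh`), where `g_i` and `a_i^{(j)}` are the type-1 part and the
type-`j` part of the letter `t_i`. -/
noncomputable def pjfac (n j : ℕ) (w : List (TV.Mn n ≃ₜ TV.Mn n)) : TV.Mn n ≃ₜ TV.Mn n :=
  (List.ofFn fun i : Fin w.length =>
    (((w.map (gpart n)).drop (i : ℕ)).prod)⁻¹ * apart n j (w.get i) *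
      ((w.map (gpart n)).drop (i : ℕ)).prod).prod

/-- The set `P_1(ℓ)`: all elements occurring as the first factor of the normal form of
some word over `T_n` of length at most `ℓ`. -/
def P1set (n ℓ : ℕ) : Set (TV.Mn n ≃ₜ TV.Mn n) :=
  {p | ∃ w : List (TV.Mn n ≃ₜ TV.Mn n),
    (∀ t ∈ w, t ∈ TV.TnSet n) ∧ w.length ≤ ℓ ∧ p = p1fac n w}

/-- The set `P_j(ℓ)`: all elements occurring as the `j`-th factor of the normal form of
some word over `T_n` of length at most `ℓ`. -/
def Pjset (n j ℓ : ℕ) : Set (TV.Mn n ≃ₜ TV.Mn n) :=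
  {p | ∃ w : List (TV.Mn n ≃ₜ TV.Mn n),
    (∀ t ∈ w, t ∈ TV.TnSet n) ∧ w.length ≤ ℓ ∧ p = pjfac n j w}

end

/-! The type-2 letters all sit over the vertex `η_n`, and conjugating one of them by the
type-1 tail `g_i ⋯ g_ℓ` moves it to `η_n · s_i ⋯ s_ℓ`. Hence `p₂` is a fibrewise
permutation with values in `Sym(4)`, supported on an inverted orbit of `η_n` under a word of
length at most `ℓ` in `S_n`. As `η_n` is `ρ_n` with its last letter flipped, and flipping the
last letter commutes with every tree automorphism, these supports are images of inverted
orbits of `ρ = 1^∞` on the boundary: there are at most `N_ρ(ℓ)` of them, each of size at most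
`Δ_ρ(ℓ)`. Therefore `|P₂(ℓ)| ≤ N_ρ(ℓ) · 24^{Δ_ρ(ℓ)} ≤ exp (C (1 + log 24) ℓ^α)`. -/

open Equiv Function TV

namespace Grig

def flipLast : List Bool → List Bool
  | [] => []
  | [x] => [!x]
  | x :: y :: w => x :: flipLast (y :: w)

theorem flipLast_cons {w : List Bool} (hw : w ≠ []) (x : Bool) :
    flipLast (x :: w) = x :: flipLast w := by
  cases w with
  | nil => exact absurd rfl hw
  | cons y u => rfl

theorem length_flipLast (w : List Bool) : (flipLast w).length = w.length := by
  induction w with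
  | nil => rfl
  | cons x t ih =>
    cases t with
    | nil => rfl
    | cons y u => simpa [flipLast] using ih

theorem flipLast_involutive : Involutive flipLast := by
  intro w
  induction w with
  | nil => rfl
  | cons x t ih =>
    cases t with
    | nil => cases x <;> rfl
    | cons y u =>
      have hne : flipLast (y :: u) ≠ [] := by simp [← List.length_pos_iff, length_flipLast]
      rw [flipLast, flipLast_cons hne, ih]

theorem flipLast_replicate_succ (m : ℕ) :
    flipLast (List.replicate (m + 1) true) = List.replicate m true ++ [false] := by
  induction m with
  | zero => rfl
  | succ m ih =>
    rw [List.replicate_succ, flipLast_cons (by simp), ih]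
    rfl

theorem flipLast_comm (w : List Bool) :
    aFun (flipLast w) = flipLast (aFun w) ∧ bFun (flipLast w) = flipLast (bFun w) ∧
    cFun (flipLast w) = flipLast (cFun w) ∧ dFun (flipLast w) = flipLast (dFun w) := by
  induction w with
  | nil => exact ⟨rfl, rfl, rfl, rfl⟩
  | cons x t ih =>
    cases t with
    | nil => cases x <;> exact ⟨rfl, rfl, rfl, rfl⟩
    | cons y u => cases x <;> cases y <;> simp_all [flipLast, aFun, bFun, cFun, dFun]

theorem take_comm (w : List Bool) (m : ℕ) :
    (aFun w).take m = aFun (w.take m) ∧ (bFun w).take m = bFun (w.take m) ∧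
    (cFun w).take m = cFun (w.take m) ∧ (dFun w).take m = dFun (w.take m) := by
  induction w generalizing m with
  | nil => simp [aFun, bFun, cFun, dFun]
  | cons x t ih =>
    cases m with
    | zero => simp [aFun, bFun, cFun, dFun]
    | succ m => cases x <;> simp_all [aFun, bFun, cFun, dFun]

theorem length_apply_of_mem_Sset {g : Perm (List Bool)} (hg : g ∈ Sset) (w : List Bool) :
    (g w).length = w.length := by
  rcases hg with rfl | rfl | rfl | rfl
  exacts [aFun_length w, bFun_length w, cFun_length w, dFun_length w]

theorem take_apply_of_mem_Sset {g : Perm (List Bool)} (hg : g ∈ Sset) (w : List Bool) (m : ℕ) :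
    (g w).take m = g (w.take m) := by
  rcases hg with rfl | rfl | rfl | rfl
  exacts [(take_comm w m).1, (take_comm w m).2.1, (take_comm w m).2.2.1, (take_comm w m).2.2.2]

theorem apply_flipLast_of_mem_Sset {g : Perm (List Bool)} (hg : g ∈ Sset)
    (w : List Bool) : g (flipLast w) = flipLast (g w) := by
  rcases hg with rfl | rfl | rfl | rfl
  exacts [(flipLast_comm w).1, (flipLast_comm w).2.1, (flipLast_comm w).2.2.1,
    (flipLast_comm w).2.2.2]

theorem Sset_finite : Sset.Finite := Set.toFinite {aPerm, bPerm, cPerm, dPerm}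

end Grig

namespace TV

open Grig

theorem ofFn_levelFun {n : ℕ} {f : List Bool → List Bool} (hf : ∀ w, (f w).length = w.length)
    (v : XL n) : List.ofFn (levelFun n f v) = f (List.ofFn v) := by
  apply List.ext_getElem
  · simp [hf]
  · intro i _ h
    simp [levelFun, List.getElem?_eq_getElem h]

theorem levelFun_levelFun {n : ℕ} {f h : List Bool → List Bool}
    (hh : ∀ w, (h w).length = w.length) (v : XL n) :
    levelFun n f (levelFun n h v) = levelFun n (f ∘ h) v := by
  funext i
  simp only [levelFun, ofFn_levelFun hh, comp_apply]

def flipLev (n : ℕ) : Perm (XL n) :=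
  (levelFun_involutive n flipLast length_flipLast flipLast_involutive).toPerm

theorem flipLev_rhoL (n : ℕ) : flipLev n (rhoL n) = etaL n := by
  funext i
  obtain ⟨m, rfl⟩ : ∃ m, n = m + 1 := Nat.exists_eq_add_one_of_ne_zero (Fin.pos i).ne'
  change (flipLast (List.ofFn fun _ : Fin (m + 1) => true)).getD i false = etaL (m + 1) i
  rw [List.ofFn_const, flipLast_replicate_succ]
  rcases lt_or_eq_of_le (Nat.lt_succ_iff.mp i.2) with hi | hi <;>
    simp [etaL, List.getD_eq_getElem?_getD, List.getElem?_append, hi]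

def SLevSet (n : ℕ) : Set (Perm (XL n)) := {aLev n, bLev n, cLev n, dLev n}

theorem exists_levelFun_of_mem_SLevSet {n : ℕ} {s : Perm (XL n)} (hs : s ∈ SLevSet n) :
    ∃ g ∈ Sset, ⇑s = levelFun n g := by
  rcases hs with rfl | rfl | rfl | rfl
  exacts [⟨aPerm, by simp [Sset], rfl⟩, ⟨bPerm, by simp [Sset], rfl⟩,
    ⟨cPerm, by simp [Sset], rfl⟩, ⟨dPerm, by simp [Sset], rfl⟩]

theorem inv_eq_self_of_mem_SLevSet {n : ℕ} {s : Perm (XL n)} (hs : s ∈ SLevSet n) :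
    s⁻¹ = s := by
  rcases hs with rfl | rfl | rfl | rfl <;> rfl

theorem commute_flipLev_of_mem_SLevSet {n : ℕ} {s : Perm (XL n)} (hs : s ∈ SLevSet n) :
    Commute (flipLev n) s := by
  obtain ⟨g, hg, hsg⟩ := exists_levelFun_of_mem_SLevSet hs
  have hcomp : flipLast ∘ g = g ∘ flipLast :=
    funext fun w => (apply_flipLast_of_mem_Sset hg w).symm
  refine Equiv.ext fun v => ?_
  change flipLev n (s v) = s (flipLev n v)
  rw [hsg]
  change levelFun n flipLast (levelFun n g v) = levelFun n g (levelFun n flipLast v)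
  rw [levelFun_levelFun (length_apply_of_mem_Sset hg), levelFun_levelFun length_flipLast, hcomp]

def truncLevel (n : ℕ) (ξ : ℕ → Bool) : XL n := fun i => ξ i

theorem truncLevel_boundaryAct {n : ℕ} {g : Perm (List Bool)} (hg : g ∈ Sset) (ξ : ℕ → Bool) :
    truncLevel n (boundaryAct g ξ) = levelFun n g (truncLevel n ξ) := by
  funext i
  have hprefix :
      (List.ofFn fun j : Fin (i + 1) => ξ j) = (List.ofFn (truncLevel n ξ)).take (i + 1) := by
    refine List.ext_getElem (by simp) fun j _ _ => ?_
    simp only [List.getElem_ofFn, List.getElem_take, truncLevel]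
  change (g _).getD i false = (g _).getD i false
  rw [hprefix, ← take_apply_of_mem_Sset hg]
  simp [List.getD_eq_getElem?_getD]

def RestrictsTo (n : ℕ) (g : Perm (List Bool)) (s : Perm (XL n)) : Prop :=
  g ∈ Sset ∧ s ∈ SLevSet n ∧ ⇑s = levelFun n g

theorem exists_forall₂_restrictsTo {n : ℕ} {l : List (Perm (XL n))}
    (hl : ∀ s ∈ l, s ∈ SLevSet n) : ∃ lb, List.Forall₂ (RestrictsTo n) lb l := by
  induction l with
  | nil => exact ⟨[], .nil⟩
  | cons s l ih =>
    obtain ⟨lb, hlb⟩ := ih fun t ht => hl t (List.mem_cons_of_mem s ht)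
    have hs := hl s List.mem_cons_self
    obtain ⟨g, hg, hgs⟩ := exists_levelFun_of_mem_SLevSet hs
    exact ⟨g :: lb, .cons ⟨hg, hs, hgs⟩ hlb⟩

theorem truncLevel_wordApplyB {n : ℕ} {lb : List (Perm (List Bool))} {l : List (Perm (XL n))}
    (h : List.Forall₂ (RestrictsTo n) lb l) (ξ : ℕ → Bool) :
    truncLevel n (wordApplyB lb ξ) = l.prod⁻¹ (truncLevel n ξ) := by
  induction h generalizing ξ with
  | nil => rfl
  | @cons g s lb l hgs _ ih =>
    obtain ⟨hg, hs, hgs⟩ := hgs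
    change truncLevel n (wordApplyB lb (boundaryAct g ξ)) = _
    rw [ih, truncLevel_boundaryAct hg, ← hgs, List.prod_cons, mul_inv_rev,
      inv_eq_self_of_mem_SLevSet hs, Perm.mul_apply]

theorem exists_boundary_word {n : ℕ} {l : List (Perm (XL n))} (hl : ∀ s ∈ l, s ∈ SLevSet n) :
    ∃ lb : List (Perm (List Bool)), (∀ g ∈ lb, g ∈ Sset) ∧ lb.length = l.length ∧
      ∀ i, (l.drop i).prod⁻¹ (etaL n) =
        flipLev n (truncLevel n (wordApplyB (lb.drop i) rhoInf)) := by
  obtain ⟨lb, hlb⟩ := exists_forall₂_restrictsTo hl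
  refine ⟨lb, ((List.forall₂_and_left _ _).1 hlb).1, hlb.length_eq, fun i => ?_⟩
  have hcomm : Commute (flipLev n) (l.drop i).prod⁻¹ :=
    (Commute.list_prod_right _ _ fun s hs =>
      commute_flipLev_of_mem_SLevSet (hl s (List.mem_of_mem_drop hs))).inv_right
  rw [truncLevel_wordApplyB (List.forall₂_drop i hlb), ← flipLev_rhoL, ← Perm.mul_apply,
    ← hcomm.eq]
  rfl

end TV

namespace Equiv.Perm

variable {α : Type*} (β : Type*)

@[simps]
def prodCongrReflHom : Perm α →* Perm (α × β) where
  toFun σ := σ.prodCongr (Equiv.refl β)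
  map_one' := rfl
  map_mul' _ _ := rfl

variable {β}

@[simps]
def prodCongrRightHom : (α → Perm β) →* Perm (α × β) where
  toFun := prodCongrRight
  map_one' := rfl
  map_mul' _ _ := rfl

theorem conj_prodCongrRightHom (σ : Perm α) (F : α → Perm β) :
    (prodCongrReflHom β σ)⁻¹ * prodCongrRightHom F * prodCongrReflHom β σ =
      prodCongrRightHom (F ∘ σ) := by
  ext ⟨x, y⟩ <;> simp

end Equiv.Perm

def basePermHom (X Y : Type*) [TopologicalSpace X] [TopologicalSpace Y] [DiscreteTopology Y] :
    Perm Y →* ((X × Y) ≃ₜ (X × Y)) where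
  toFun := basePermHomeo
  map_one' := rfl
  map_mul' _ _ := rfl

theorem setOf_exists_eq_drop {β γ : Type*} [DecidableEq γ] (f : List β → γ) (l : List β) :
    {y | ∃ i, y = f (l.drop i)} = ↑(l.tails.map f).toFinset := by
  ext y
  simp only [Set.mem_ofPred_eq, Finset.mem_coe, List.mem_toFinset, List.mem_map, List.mem_tails]
  constructor
  · rintro ⟨i, rfl⟩
    exact ⟨_, List.drop_suffix i l, rfl⟩
  · rintro ⟨t, ht, rfl⟩
    exact ⟨_, congrArg f (List.suffix_iff_eq_drop.1 ht)⟩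

theorem finite_setOf_exists_eq_drop {β γ : Type*} (f : List β → γ) (l : List β) :
    {y | ∃ i, y = f (l.drop i)}.Finite := by
  classical
  rw [setOf_exists_eq_drop]
  exact Finset.finite_toSet _

theorem ncard_setOf_exists_eq_drop_le {β γ : Type*} (f : List β → γ) (l : List β) :
    {y | ∃ i, y = f (l.drop i)}.ncard ≤ l.length + 1 := by
  classical
  rw [setOf_exists_eq_drop, Set.ncard_coe_finset, ← List.length_tails, ← List.length_map f]
  exact List.toFinset_card_le _

theorem exists_prod_drop_filter_eq {M : Type*} [Monoid M] [DecidableEq M] (l : List M) (i : ℕ) :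
    ∃ j, ((l.filter (· != 1)).drop j).prod = (l.drop i).prod := by
  obtain ⟨j, hj⟩ : ∃ j, (l.drop i).filter (· != 1) = (l.filter (· != 1)).drop j :=
    ⟨_, List.suffix_iff_eq_drop.1 ((List.drop_suffix i l).filter _)⟩
  exact ⟨j, by rw [← hj, List.prod_filter_bne_one]⟩

theorem finite_setOf_forall_mem_length_le {β : Type*} {A : Set β} (hA : A.Finite) (m : ℕ) :
    {l : List β | (∀ x ∈ l, x ∈ A) ∧ l.length ≤ m}.Finite := by
  have := hA.to_subtype
  refine ((List.finite_length_le A m).image (List.map Subtype.val)).subset ?_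
  rintro l ⟨hl, hlen⟩
  lift l to List A using hl
  exact ⟨l, by simpa using hlen, rfl⟩

theorem ncard_setOf_mulSupport_subset_le {X G : Type*} [Finite X] [Finite G] [One G]
    (O : Set X) : {F : X → G | mulSupport F ⊆ O}.ncard ≤ Nat.card G ^ O.ncard := by
  rw [← Nat.card_coe_set_eq, ← Nat.card_coe_set_eq O, ← Nat.card_fun]
  refine Nat.card_le_card_of_injective (fun F (x : O) => F.1 x) fun F₁ F₂ h => ?_
  ext x
  by_cases hx : x ∈ O
  · exact congrFun h ⟨x, hx⟩
  · rw [notMem_mulSupport.1 fun h => hx (F₁.2 h), notMem_mulSupport.1 fun h => hx (F₂.2 h)]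

theorem ncard_setOf_exists_mulSupport_subset_le {X G : Type*} [Finite X] [Finite G] [One G]
    {Fam : Set (Set X)} {k : ℕ} (hk : ∀ O ∈ Fam, O.ncard ≤ k) :
    {F : X → G | ∃ O ∈ Fam, mulSupport F ⊆ O}.ncard ≤ Fam.ncard * Nat.card G ^ k := by
  have hFam := Fam.toFinite
  calc {F : X → G | ∃ O ∈ Fam, mulSupport F ⊆ O}.ncard
      = (⋃ O ∈ hFam.toFinset, {F : X → G | mulSupport F ⊆ O}).ncard := by
        congr 1
        ext F
        simp
    _ ≤ ∑ O ∈ hFam.toFinset, {F : X → G | mulSupport F ⊆ O}.ncard :=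
        Finset.set_ncard_biUnion_le _ _
    _ ≤ ∑ _O ∈ hFam.toFinset, Nat.card G ^ k :=
        Finset.sum_le_sum fun O hO => (ncard_setOf_mulSupport_subset_le O).trans
          (Nat.pow_le_pow_right Nat.card_pos (hk O (hFam.mem_toFinset.1 hO)))
    _ = Fam.ncard * Nat.card G ^ k := by
        rw [Finset.sum_const, smul_eq_mul, ← Set.ncard_eq_toFinset_card]

def orbitFamily (m : ℕ) : Set (Set (ℕ → Bool)) :=
  {O | ∃ l : List (Perm (List Bool)),
    (∀ x ∈ l, x ∈ Grig.Sset) ∧ l.length ≤ m ∧ O = invOrbitB l rhoInf}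

theorem NorbB_eq_ncard (m : ℕ) : NorbB m = (orbitFamily m).ncard := Nat.card_coe_set_eq _

theorem orbitFamily_finite (m : ℕ) : (orbitFamily m).Finite := by
  refine ((finite_setOf_forall_mem_length_le Grig.Sset_finite m).image
    fun l => invOrbitB l rhoInf).subset ?_
  rintro _ ⟨l, hl, hlen, rfl⟩
  exact ⟨l, ⟨hl, hlen⟩, rfl⟩

theorem ncard_invOrbitB_le_DeltaB {m : ℕ} {l : List (Perm (List Bool))}
    (hl : ∀ g ∈ l, g ∈ Grig.Sset) (hlen : l.length ≤ m) :
    (invOrbitB l rhoInf).ncard ≤ DeltaB m := by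
  refine le_csSup ⟨m + 1, ?_⟩ ⟨l, hl, hlen, Nat.card_coe_set_eq _⟩
  rintro k ⟨l', -, hlen', rfl⟩
  rw [Nat.card_coe_set_eq]
  exact (ncard_setOf_exists_eq_drop_le _ l').trans (by omega)

namespace TV

open Perm

local notation "Φ" n => basePermHom Cantor (XL n × Fin 4)

theorem exists_gpart_eq (n : ℕ) (t : Mn n ≃ₜ Mn n) :
    ∃ s ∈ SLevSet n ∪ {1}, gpart n t = (Φ n) (prodCongrReflHom (Fin 4) s) := by
  by_cases ht : t ∈ Type1Set n
  · rw [gpart, if_pos ht]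
    rcases ht with rfl | rfl | rfl | rfl
    exacts [⟨_, .inl (.inl rfl), rfl⟩, ⟨_, .inl (.inr (.inl rfl)), rfl⟩,
      ⟨_, .inl (.inr (.inr (.inl rfl))), rfl⟩, ⟨_, .inl (.inr (.inr (.inr rfl))), rfl⟩]
  · exact ⟨1, .inr rfl, by rw [gpart, if_neg ht, map_one, map_one]⟩

theorem exists_apart_two_eq (n : ℕ) (t : Mn n ≃ₜ Mn n) :
    ∃ π : Perm (Fin 4), apart n 2 t = (Φ n) (prodCongrRightHom (Pi.mulSingle (etaL n) π)) := by
  by_cases ht : t ∈ Type2Set n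
  · obtain ⟨π, rfl⟩ := ht
    refine ⟨π, ?_⟩
    rw [apart, if_pos ⟨π, rfl⟩]
    change basePermHomeo _ = basePermHomeo _
    congr 2
    funext x
    rw [Pi.mulSingle_apply]
    rfl
  · exact ⟨1, by rw [apart, if_neg (show t ∉ typeSet n 2 from ht), Pi.mulSingle_one, map_one,
      map_one]⟩

/-- `(l.drop i).prod⁻¹ x` is `x · s_{i+1} ⋯ s_ℓ` for the right action `x · s = s⁻¹ x`. -/
theorem exists_pjfac_two_eq (n : ℕ) (w : List (Mn n ≃ₜ Mn n)) :
    ∃ l : List (Perm (XL n)), (∀ s ∈ l, s ∈ SLevSet n ∪ {1}) ∧ l.length = w.length ∧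
      ∃ F : XL n → Perm (Fin 4), pjfac n 2 w = (Φ n) (prodCongrRightHom F) ∧
        ∀ x, F x ≠ 1 → ∃ i, x = (l.drop i).prod⁻¹ (etaL n) := by
  choose σ hσ hgσ using exists_gpart_eq n
  choose π hπ using exists_apart_two_eq n
  set l := w.map σ
  have htail (i : ℕ) : ((w.map (gpart n)).drop i).prod =
      (Φ n) (prodCongrReflHom (Fin 4) (l.drop i).prod) := by
    simp only [l, ← List.map_drop, map_list_prod, List.map_map]
    exact congrArg List.prod (List.map_congr_left fun t _ => hgσ t)
  set f : Fin w.length → XL n → Perm (Fin 4) :=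
    fun i => Pi.mulSingle (etaL n) (π (w.get i)) ∘ (l.drop i).prod
  refine ⟨l, List.forall_mem_map.2 fun t _ => hσ t, List.length_map .., (List.ofFn f).prod, ?_,
    fun x hx => ?_⟩
  · unfold pjfac
    rw [map_list_prod, map_list_prod, List.map_ofFn, List.map_ofFn]
    refine congrArg List.prod (List.ofFn_inj.2 (funext fun i => ?_))
    rw [htail, hπ, ← map_inv, ← map_mul, ← map_mul, conj_prodCongrRightHom]
    rfl
  · obtain ⟨i, hi⟩ : ∃ i, f i x ≠ 1 := by
      by_contra! h
      refine hx ?_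
      rw [Pi.list_prod_apply, List.map_ofFn]
      exact List.prod_eq_one (by simp [h])
    refine ⟨i, Perm.eq_inv_iff_eq.2 ?_⟩
    by_contra hne
    exact hi (Pi.mulSingle_eq_of_ne hne _)

theorem exists_mem_orbitFamily_pjfac_two_eq (n : ℕ) (w : List (Mn n ≃ₜ Mn n)) :
    ∃ B ∈ orbitFamily w.length, ∃ F : XL n → Perm (Fin 4),
      pjfac n 2 w = (Φ n) (prodCongrRightHom F) ∧
        mulSupport F ⊆ (flipLev n ∘ truncLevel n) '' B := by
  obtain ⟨l, hl, hlen, F, hF, hsupp⟩ := exists_pjfac_two_eq n w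
  have hl' : ∀ s ∈ l.filter (· != 1), s ∈ SLevSet n := by
    intro s hs
    rw [List.mem_filter, bne_iff_ne] at hs
    exact (hl s hs.1).resolve_right hs.2
  obtain ⟨lb, hlb, hlen', hη⟩ := exists_boundary_word hl'
  refine ⟨invOrbitB lb rhoInf, ⟨lb, hlb, ?_, rfl⟩, F, hF, fun x hx => ?_⟩
  · exact hlen' ▸ hlen ▸ List.length_filter_le _ _
  obtain ⟨i, rfl⟩ := hsupp x hx
  obtain ⟨j, hj⟩ := exists_prod_drop_filter_eq l i
  exact ⟨_, ⟨j, rfl⟩, by rw [← hj, hη]; rfl⟩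

theorem ncard_Pjset_two_le (n ℓ : ℕ) : (Pjset n 2 ℓ).ncard ≤ NorbB ℓ * 24 ^ DeltaB ℓ := by
  set shadow : Set (ℕ → Bool) → Set (XL n) := Set.image (flipLev n ∘ truncLevel n)
  have hsub : Pjset n 2 ℓ ⊆ (fun F => (Φ n) (prodCongrRightHom F)) ''
      {F : XL n → Perm (Fin 4) | ∃ O ∈ shadow '' orbitFamily ℓ, mulSupport F ⊆ O} := by
    rintro p ⟨w, -, hw, rfl⟩
    obtain ⟨B, ⟨lb, hlb, hlen, rfl⟩, F, hF, hsupp⟩ := exists_mem_orbitFamily_pjfac_two_eq n w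
    exact ⟨F, ⟨_, ⟨_, ⟨lb, hlb, hlen.trans hw, rfl⟩, rfl⟩, hsupp⟩, hF.symm⟩
  have hshadow : ∀ O ∈ shadow '' orbitFamily ℓ, O.ncard ≤ DeltaB ℓ := by
    rintro _ ⟨_, ⟨l, hl, hlen, rfl⟩, rfl⟩
    exact (Set.ncard_image_le (finite_setOf_exists_eq_drop _ l)).trans
      (ncard_invOrbitB_le_DeltaB hl hlen)
  calc (Pjset n 2 ℓ).ncard
      ≤ {F : XL n → Perm (Fin 4) | ∃ O ∈ shadow '' orbitFamily ℓ, mulSupport F ⊆ O}.ncard :=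
        (Set.ncard_le_ncard hsub).trans Set.ncard_image_le
    _ ≤ (shadow '' orbitFamily ℓ).ncard * Nat.card (Perm (Fin 4)) ^ DeltaB ℓ :=
        ncard_setOf_exists_mulSupport_subset_le hshadow
    _ ≤ NorbB ℓ * 24 ^ DeltaB ℓ := by
        rw [NorbB_eq_ncard, Nat.card_perm, Nat.card_eq_fintype_card, Fintype.card_fin]
        exact Nat.mul_le_mul_right _ (Set.ncard_image_le (orbitFamily_finite ℓ))

theorem Pjset_zero (n j : ℕ) : Pjset n j 0 = {1} := by
  ext p
  simp only [Pjset, nonpos_iff_eq_zero, List.length_eq_zero_iff, Set.mem_singleton_iff]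
  constructor
  · rintro ⟨w, -, rfl, rfl⟩
    rfl
  · rintro rfl
    exact ⟨[], by simp, rfl, rfl⟩

end TV

/-- **Counting the second factor:** if `Δ_ρ^S(m) ≤ C m^α` and `N_ρ^S(m) ≤ exp(C m^α)`
for all `m ≥ 1`, with `C > 0` and `0 < α < 1`, then there is a constant `C₂ > 0` with
`|P_2(ℓ)| ≤ exp(C₂ ℓ^α)` for every sufficiently large `n` and every `ℓ ≤ r_n = 2^⌊n/2⌋`. -/
theorem counting_p2 (C α : ℝ) (hC : 0 < C) (hα₀ : 0 < α) (hα₁ : α < 1)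
    (hyp : ∀ m : ℕ, 1 ≤ m →
      (DeltaB m : ℝ) ≤ C * (m : ℝ) ^ α ∧ (NorbB m : ℝ) ≤ Real.exp (C * (m : ℝ) ^ α)) :
    ∃ C₂ : ℝ, 0 < C₂ ∧ ∃ N : ℕ, ∀ n : ℕ, N ≤ n → ∀ ℓ : ℕ, ℓ ≤ 2 ^ (n / 2) →
      (Nat.card (Pjset n 2 ℓ) : ℝ) ≤ Real.exp (C₂ * (ℓ : ℝ) ^ α) := by
  have hlog : 0 < Real.log 24 := Real.log_pos (by norm_num)
  refine ⟨C * (1 + Real.log 24), by positivity, 0, fun n _ ℓ _ => ?_⟩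
  rw [Nat.card_coe_set_eq]
  rcases Nat.eq_zero_or_pos ℓ with rfl | hℓ
  · rw [TV.Pjset_zero, Set.ncard_singleton, Nat.cast_one]
    exact Real.one_le_exp (by positivity)
  obtain ⟨hΔ, hN⟩ := hyp ℓ hℓ
  have h24 : (24 : ℝ) ^ DeltaB ℓ ≤ Real.exp (Real.log 24 * (C * (ℓ : ℝ) ^ α)) := by
    rw [← Real.rpow_natCast, Real.rpow_def_of_pos (by norm_num)]
    exact Real.exp_le_exp.2 (mul_le_mul_of_nonneg_left hΔ hlog.le)
  calc ((Pjset n 2 ℓ).ncard : ℝ) ≤ NorbB ℓ * (24 : ℝ) ^ DeltaB ℓ := by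
        exact_mod_cast TV.ncard_Pjset_two_le n ℓ
    _ ≤ Real.exp (C * (ℓ : ℝ) ^ α) * Real.exp (Real.log 24 * (C * (ℓ : ℝ) ^ α)) :=
        mul_le_mul hN h24 (by positivity) (Real.exp_nonneg _)
    _ = Real.exp (C * (1 + Real.log 24) * (ℓ : ℝ) ^ α) := by
        rw [← Real.exp_add]
        congr 1
        ring
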